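/- arXiv:2604.24545 — 5 statements merged into one kernel-verified Lean document; each statement's English description precedes it below -/
import Mathlib

section
/- Let T be a positive integer, let α, β, C, C' > 0, and let X_1, …, X_T be i.i.d. samples drawn from an (α,β,C,C')-second order Pareto distribution P. Then for every x ≥ B, where B = max((2C'/C)^{1/(αβ)}, (8C)^{1/α}, (2TC')^{1/(α(1+β)))}), it holds that |Pr(max_{i≤T} X_i ≤ x) − exp(−TC·x^{−α})| ≤ M(x)·exp(−TC·x^{−α}), where M(x) = (4/T)·(TC·x^{−α})² + (2C'/(C^{β+1}·T^β))·(TC·x^{−α})^{β+1}. -/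
open MeasureTheory ProbabilityTheory Real

/-- A cdf `P : [0,∞) → [0,1]` (here as a function on `ℝ`) is
`(α,β,C,C')`-second order Pareto if `|1 - P x - C x^(-α)| ≤ C' x^(-α(1+β))` for all `x > 0`. -/
def IsSecondOrderPareto (α β C C' : ℝ) (P : ℝ → ℝ) : Prop :=
  ∀ x : ℝ, 0 < x → |1 - P x - C * x ^ (-α)| ≤ C' * x ^ (-(α * (1 + β)))

/-- The constant `B` from the paper. -/
noncomputable def paretoB (α β C C' : ℝ) (T : ℕ) : ℝ :=
  max (max ((2 * C' / C) ^ (1 / (α * β))) ((8 * C) ^ (1 / α)))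
    ((2 * (T : ℝ) * C') ^ (1 / (α * (1 + β))))

set_option maxHeartbeats 1000000

lemma aux_rpow_ge {t a x : ℝ} (ht : 0 < t) (ha : 0 < a) (hx : t ^ (1 / a) ≤ x) :
    t ≤ x ^ a := by
  have h0 : (0 : ℝ) < t ^ (1 / a) := Real.rpow_pos_of_pos ht _
  calc t = (t ^ (1 / a)) ^ a := by
        rw [← Real.rpow_mul ht.le, one_div_mul_cancel ha.ne', Real.rpow_one]
    _ ≤ x ^ a := Real.rpow_le_rpow h0.le hx ha.le

lemma pareto_core (T : ℕ) (hT : 0 < T) (p c ε : ℝ) (hc : 0 < c) (hε : 0 ≤ ε)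
    (hpc : |p - c| ≤ ε) (hεc : ε ≤ c / 2) (hc8 : c ≤ 1 / 8) (hTε : (T : ℝ) * ε ≤ 1 / 2) :
    |(1 - p) ^ T - Real.exp (-((T : ℝ) * c))| ≤
      (4 * T * c ^ 2 + 2 * T * ε) * Real.exp (-((T : ℝ) * c)) := by
  obtain ⟨hpc1, hpc2⟩ := abs_le.mp hpc
  have hT1 : (1 : ℝ) ≤ (T : ℝ) := by exact_mod_cast hT
  have hplb : c / 2 ≤ p := by linarith
  have hpub : p ≤ 3 / 16 := by linarith
  have hpub' : p ≤ 3 / 2 * c := by linarith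
  have hp0 : 0 < p := by linarith
  have h1p : (13 : ℝ) / 16 ≤ 1 - p := by linarith
  have hexp_negp_ge : (13 : ℝ) / 16 ≤ Real.exp (-p) := h1p.trans (Real.one_sub_le_exp_neg p)
  -- Taylor bound: exp(-p) - (1-p) ≤ (13/24) p^2
  have hA : Real.exp (-p) - (1 - p) ≤ 13 / 24 * p ^ 2 := by
    have hb := Real.exp_bound (x := -p) (by rw [abs_of_nonpos (by linarith)]; linarith) (n := 3) (by norm_num)
    have hsum : ∑ m ∈ Finset.range 3, (-p) ^ m / (Nat.factorial m) = 1 - p + p ^ 2 / 2 := by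
      simp [Finset.sum_range_succ, Nat.factorial]
      ring
    rw [hsum] at hb
    have habs : |(-p)| = p := by rw [abs_of_nonpos (by linarith)]; ring
    rw [habs] at hb
    have hb' := (abs_le.mp hb).2
    have hb'' : Real.exp (-p) - (1 - p + p ^ 2 / 2) ≤ 2 / 9 * p ^ 3 := by
      norm_num [Nat.factorial] at hb'
      linarith
    nlinarith [sq_nonneg p, hp0.le, hpub]
  -- 1 - p ≥ exp(-p) (1 - (2/3) p^2)
  have hB : Real.exp (-p) * (1 - 2 / 3 * p ^ 2) ≤ 1 - p := by
    nlinarith [sq_nonneg p]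
  have hδ1 : 2 / 3 * p ^ 2 ≤ 1 / 2 := by nlinarith
  have hBbase0 : 0 ≤ Real.exp (-p) * (1 - 2 / 3 * p ^ 2) := by
    have := Real.exp_pos (-p); nlinarith
  -- pow it
  have hpow_lb : Real.exp (-((T : ℝ) * p)) * (1 - (T : ℝ) * (2 / 3 * p ^ 2)) ≤ (1 - p) ^ T := by
    have h1 : (Real.exp (-p) * (1 - 2 / 3 * p ^ 2)) ^ T ≤ (1 - p) ^ T :=
      pow_le_pow_left₀ hBbase0 hB T
    have h2 : (Real.exp (-p) * (1 - 2 / 3 * p ^ 2)) ^ T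
        = Real.exp (-((T : ℝ) * p)) * (1 - 2 / 3 * p ^ 2) ^ T := by
      rw [mul_pow, ← Real.exp_nat_mul]
      ring_nf
    have h3 : 1 - (T : ℝ) * (2 / 3 * p ^ 2) ≤ (1 - 2 / 3 * p ^ 2) ^ T := by
      have := one_add_mul_le_pow (a := -(2 / 3 * p ^ 2)) (by nlinarith) T
      calc 1 - (T : ℝ) * (2 / 3 * p ^ 2) = 1 + (T : ℝ) * (-(2 / 3 * p ^ 2)) := by ring
        _ ≤ (1 + -(2 / 3 * p ^ 2)) ^ T := this
        _ = (1 - 2 / 3 * p ^ 2) ^ T := by ring_nf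
    calc Real.exp (-((T : ℝ) * p)) * (1 - (T : ℝ) * (2 / 3 * p ^ 2))
        ≤ Real.exp (-((T : ℝ) * p)) * (1 - 2 / 3 * p ^ 2) ^ T := by
          exact mul_le_mul_of_nonneg_left h3 (Real.exp_pos _).le
      _ = (Real.exp (-p) * (1 - 2 / 3 * p ^ 2)) ^ T := h2.symm
      _ ≤ (1 - p) ^ T := h1
  have hpow_ub : (1 - p) ^ T ≤ Real.exp (-((T : ℝ) * p)) := by
    have h1 : (1 - p) ^ T ≤ (Real.exp (-p)) ^ T :=
      pow_le_pow_left₀ (by linarith) (Real.one_sub_le_exp_neg p) T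
    rw [← Real.exp_nat_mul] at h1
    have heq : (T : ℝ) * -p = -((T : ℝ) * p) := by ring
    rwa [heq] at h1
  set u : ℝ := (T : ℝ) * ε with hu_def
  have hu0 : 0 ≤ u := by positivity
  have hE1 : Real.exp u - 1 ≤ 3 / 2 * u := by
    have := Real.abs_exp_sub_one_sub_id_le (x := u) (by rw [abs_of_nonneg hu0]; linarith)
    have h2 := (abs_le.mp this).2
    nlinarith
  have hexp_u_le : Real.exp u ≤ 5 / 3 := by
    have h1 : Real.exp u ≤ Real.exp (1 / 2) := Real.exp_le_exp.mpr (by linarith)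
    have h2 : Real.exp (1 / 2) * Real.exp (1 / 2) = Real.exp 1 := by
      rw [← Real.exp_add]; norm_num
    have h3 := Real.exp_one_lt_d9
    nlinarith [Real.exp_pos (1/2)]
  set E : ℝ := Real.exp (-((T : ℝ) * c)) with hE_def
  have hE0 : 0 < E := Real.exp_pos _
  have hTp_le : Real.exp (-((T : ℝ) * p)) ≤ E * Real.exp u := by
    rw [← Real.exp_add]
    apply Real.exp_le_exp.mpr
    have : (T : ℝ) * (c - p) ≤ (T : ℝ) * ε :=
      mul_le_mul_of_nonneg_left (by linarith) (by positivity)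
    simp only [hu_def]; nlinarith
  have hTc_le : E ≤ Real.exp (-((T : ℝ) * p)) * Real.exp u := by
    rw [← Real.exp_add]
    apply Real.exp_le_exp.mpr
    have : (T : ℝ) * (p - c) ≤ (T : ℝ) * ε :=
      mul_le_mul_of_nonneg_left (by linarith) (by positivity)
    simp only [hu_def]; nlinarith
  -- upper bound
  have hupper : (1 - p) ^ T - E ≤ (4 * T * c ^ 2 + 2 * T * ε) * E := by
    have h1 : (1 - p) ^ T - E ≤ E * (Real.exp u - 1) := by
      have := hpow_ub.trans hTp_le
      nlinarith
    have h2 : E * (Real.exp u - 1) ≤ E * (3 / 2 * u) :=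
      mul_le_mul_of_nonneg_left hE1 hE0.le
    have h3 : 0 ≤ 4 * (T : ℝ) * c ^ 2 := by positivity
    nlinarith
  -- lower bound
  have hlower : E - (1 - p) ^ T ≤ (4 * T * c ^ 2 + 2 * T * ε) * E := by
    have hq : Real.exp (-((T : ℝ) * p)) ≤ 5 / 3 * E := by
      calc Real.exp (-((T : ℝ) * p)) ≤ E * Real.exp u := hTp_le
        _ ≤ E * (5 / 3) := mul_le_mul_of_nonneg_left hexp_u_le hE0.le
        _ = 5 / 3 * E := by ring
    -- E - exp(-Tp) ≤ E * u
    have h1 : E - Real.exp (-((T : ℝ) * p)) ≤ E * u := by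
      have hinv : E * Real.exp (-u) ≤ Real.exp (-((T : ℝ) * p)) := by
        rw [← Real.exp_add]
        apply Real.exp_le_exp.mpr
        have : (T : ℝ) * (p - c) ≤ (T : ℝ) * ε :=
          mul_le_mul_of_nonneg_left (by linarith) (by positivity)
        simp only [hu_def]; nlinarith
      have hone : 1 - u ≤ Real.exp (-u) := Real.one_sub_le_exp_neg u
      nlinarith
    have h2 : Real.exp (-((T : ℝ) * p)) - (1 - p) ^ T
        ≤ Real.exp (-((T : ℝ) * p)) * ((T : ℝ) * (2 / 3 * p ^ 2)) := by
      nlinarith [Real.exp_pos (-((T : ℝ) * p))]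
    have h3 : Real.exp (-((T : ℝ) * p)) * ((T : ℝ) * (2 / 3 * p ^ 2))
        ≤ 5 / 3 * E * ((T : ℝ) * (2 / 3 * p ^ 2)) := by
      have : 0 ≤ (T : ℝ) * (2 / 3 * p ^ 2) := by positivity
      exact mul_le_mul_of_nonneg_right hq this
    have hp2 : p ^ 2 ≤ 9 / 4 * c ^ 2 := by nlinarith
    have h4 : 5 / 3 * E * ((T : ℝ) * (2 / 3 * p ^ 2)) ≤ E * (5 / 2 * (T : ℝ) * c ^ 2) := by
      calc 5 / 3 * E * ((T : ℝ) * (2 / 3 * p ^ 2))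
          ≤ 5 / 3 * E * ((T : ℝ) * (2 / 3 * (9 / 4 * c ^ 2))) := by gcongr
        _ = E * (5 / 2 * (T : ℝ) * c ^ 2) := by ring
    have h5 : E * u + E * (5 / 2 * (T : ℝ) * c ^ 2) ≤ (4 * T * c ^ 2 + 2 * T * ε) * E := by
      have h6 : 0 ≤ (T : ℝ) * ε * E := by positivity
      have h7 : 0 ≤ (T : ℝ) * c ^ 2 * E := by positivity
      simp only [hu_def]
      linarith
    linarith
  rw [abs_le]
  constructor <;> linarith

theorem max_second_order_pareto_frechet_approx
    {Ω : Type*} [MeasurableSpace Ω] (μ : Measure Ω) [IsProbabilityMeasure μ]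
    (T : ℕ) (hT : 0 < T) (α β C C' : ℝ) (hα : 0 < α) (hβ : 0 < β)
    (hC : 0 < C) (hC' : 0 < C')
    (P : ℝ → ℝ) (hP : IsSecondOrderPareto α β C C' P)
    (X : Fin T → Ω → ℝ) (hmeas : ∀ i, Measurable (X i))
    (hindep : iIndepFun X μ)
    (hdist : ∀ i x, (μ {ω | X i ω ≤ x}).toReal = P x)
    (x : ℝ) (hx : paretoB α β C C' T ≤ x) :
    |(μ {ω | ∀ i, X i ω ≤ x}).toReal - Real.exp (-((T : ℝ) * C * x ^ (-α)))| ≤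
      (4 / (T : ℝ) * ((T : ℝ) * C * x ^ (-α)) ^ (2 : ℝ)
          + 2 * C' / (C ^ (β + 1) * (T : ℝ) ^ β) * ((T : ℝ) * C * x ^ (-α)) ^ (β + 1))
        * Real.exp (-((T : ℝ) * C * x ^ (-α))) := by

  have hT0 : (0 : ℝ) < T := by exact_mod_cast hT
  have hx2 : (8 * C) ^ (1 / α) ≤ x :=
    le_trans (le_trans (le_max_right _ _) (le_max_left _ _)) hx
  have hx1 : (2 * C' / C) ^ (1 / (α * β)) ≤ x :=
    le_trans (le_trans (le_max_left _ _) (le_max_left _ _)) hx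
  have hx3 : (2 * (T : ℝ) * C') ^ (1 / (α * (1 + β))) ≤ x :=
    le_trans (le_max_right _ _) hx
  have hx0 : 0 < x := lt_of_lt_of_le (Real.rpow_pos_of_pos (by positivity) _) hx2
  set c : ℝ := C * x ^ (-α) with hc_def
  set ε : ℝ := C' * x ^ (-(α * (1 + β))) with hε_def
  have hxa : (0 : ℝ) < x ^ α := Real.rpow_pos_of_pos hx0 _
  have hxna : (0 : ℝ) < x ^ (-α) := Real.rpow_pos_of_pos hx0 _
  have hxab : (0 : ℝ) < x ^ (α * β) := Real.rpow_pos_of_pos hx0 _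
  have hxab1 : (0 : ℝ) < x ^ (α * (1 + β)) := Real.rpow_pos_of_pos hx0 _
  have hc0 : 0 < c := by positivity
  have hε0 : 0 < ε := by positivity
  -- c ≤ 1/8
  have hc8 : c ≤ 1 / 8 := by
    have h8C : 8 * C ≤ x ^ α := aux_rpow_ge (by positivity) hα hx2
    have hinv : x ^ (-α) = (x ^ α)⁻¹ := Real.rpow_neg hx0.le _
    have hmul : x ^ α * (x ^ α)⁻¹ = 1 := mul_inv_cancel₀ hxa.ne'
    rw [hc_def, hinv]
    have h2 := mul_le_mul_of_nonneg_right h8C (inv_nonneg.mpr hxa.le)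
    nlinarith
  -- ε ≤ c / 2
  have hεc : ε ≤ c / 2 := by
    have hmono : 2 * C' / C ≤ x ^ (α * β) :=
      aux_rpow_ge (by positivity) (by positivity) hx1
    have hsplit : x ^ (-(α * (1 + β))) = x ^ (-α) * (x ^ (α * β))⁻¹ := by
      rw [← Real.rpow_neg hx0.le (α * β), ← Real.rpow_add hx0]
      congr 1; ring
    have hmul : x ^ (α * β) * (x ^ (α * β))⁻¹ = 1 := mul_inv_cancel₀ hxab.ne'
    have h2 := mul_le_mul_of_nonneg_right hmono (inv_nonneg.mpr hxab.le)
    have h3 : 2 * C' / C * (x ^ (α * β))⁻¹ ≤ 1 := by rwa [hmul] at h2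
    have h4 : C' * (x ^ (α * β))⁻¹ ≤ C / 2 := by
      have hCinv := mul_le_mul_of_nonneg_left h3 (le_of_lt (half_pos hC))
      have : C / 2 * (2 * C' / C * (x ^ (α * β))⁻¹) = C' * (x ^ (α * β))⁻¹ := by
        field_simp
      nlinarith
    rw [hε_def, hc_def, hsplit]
    nlinarith
  -- T ε ≤ 1/2
  have hTε : (T : ℝ) * ε ≤ 1 / 2 := by
    have hmono : 2 * (T : ℝ) * C' ≤ x ^ (α * (1 + β)) :=
      aux_rpow_ge (by positivity) (by positivity) hx3
    have hinv : x ^ (-(α * (1 + β))) = (x ^ (α * (1 + β)))⁻¹ := Real.rpow_neg hx0.le _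
    have hmul : x ^ (α * (1 + β)) * (x ^ (α * (1 + β)))⁻¹ = 1 := mul_inv_cancel₀ hxab1.ne'
    have h2 := mul_le_mul_of_nonneg_right hmono (inv_nonneg.mpr hxab1.le)
    rw [hε_def, hinv]
    nlinarith
  -- the probability of the max
  have hmax : (μ {ω | ∀ i, X i ω ≤ x}).toReal = (P x) ^ T := by
    have hset : {ω | ∀ i, X i ω ≤ x} = ⋂ i, X i ⁻¹' Set.Iic x := by
      ext ω; simp [Set.mem_iInter]
    have hprod : μ (⋂ i, X i ⁻¹' Set.Iic x) = ∏ i, μ (X i ⁻¹' Set.Iic x) :=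
      hindep.meas_iInter (fun i => ⟨Set.Iic x, measurableSet_Iic, rfl⟩)
    have hval : ∀ i : Fin T, (μ (X i ⁻¹' Set.Iic x)).toReal = P x := fun i => hdist i x
    rw [hset, hprod, ENNReal.toReal_prod]
    simp only [hval, Finset.prod_const, Finset.card_univ, Fintype.card_fin]
  -- the core analytic estimate
  set p : ℝ := 1 - P x with hp_def
  have hpc : |p - c| ≤ ε := hP x hx0
  have hcore := pareto_core T hT p c ε hc0 hε0.le hpc hεc hc8 hTε
  have hPp : P x = 1 - p := by rw [hp_def]; ring
  -- rewrite the RHS coefficient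
  have hRHS : 4 / (T : ℝ) * ((T : ℝ) * C * x ^ (-α)) ^ (2 : ℝ)
      + 2 * C' / (C ^ (β + 1) * (T : ℝ) ^ β) * ((T : ℝ) * C * x ^ (-α)) ^ (β + 1)
      = 4 * T * c ^ 2 + 2 * T * ε := by
    have e1 : ((T : ℝ) * C * x ^ (-α)) ^ (2 : ℝ) = ((T : ℝ) * C * x ^ (-α)) ^ (2 : ℕ) := by
      rw [show ((2 : ℝ)) = ((2 : ℕ) : ℝ) by norm_num, Real.rpow_natCast]
    have e2 : ((T : ℝ) * C * x ^ (-α)) ^ (β + 1)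
        = (T : ℝ) ^ (β + 1) * C ^ (β + 1) * (x ^ (-α)) ^ (β + 1) := by
      rw [Real.mul_rpow (by positivity) hxna.le, Real.mul_rpow (by positivity) hC.le]
    have e3 : (x ^ (-α)) ^ (β + 1) = x ^ (-(α * (1 + β))) := by
      rw [← Real.rpow_mul hx0.le]
      congr 1; ring
    have e4 : (T : ℝ) ^ (β + 1) = (T : ℝ) ^ β * T := by
      rw [Real.rpow_add hT0, Real.rpow_one]
    have hCb : (0 : ℝ) < C ^ (β + 1) := Real.rpow_pos_of_pos hC _
    have hTb : (0 : ℝ) < (T : ℝ) ^ β := Real.rpow_pos_of_pos hT0 _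
    rw [e1, e2, e3, e4, hc_def, hε_def]
    field_simp
  have harg : (T : ℝ) * C * x ^ (-α) = (T : ℝ) * c := by rw [hc_def]; ring
  rw [hmax, hPp, hRHS, harg]
  exact hcore
end

section
/- Let T be a positive integer, let α, β, C, C' > 0, and let X_1, …, X_T be i.i.d. samples drawn from an (α,β,C,C')-second order Pareto distribution P. Let u ∈ (0,1) and suppose T ≥ log(1/u)·B^α/C, where B = max((2C'/C)^{1/(αβ)}, (8C)^{1/α}, (2TC')^{1/(α(1+β)))}). Then |Pr(max_{i≤T} X_i ≤ (TC/log(1/u))^{1/α}) − u| ≤ u·((4/T)·(log(1/u))² + (2C'/(C^{β+1}·T^β))·(log(1/u))^{1+β}). -/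
open MeasureTheory ProbabilityTheory Real

lemma my_rpow_root_le {a x e : ℝ} (ha : 0 < a) (he : 0 < e) (h : a ^ (1/e) ≤ x) : a ≤ x ^ e := by
  calc a = (a ^ (1/e)) ^ e := by
        rw [← Real.rpow_mul ha.le, one_div, inv_mul_cancel₀ he.ne', Real.rpow_one]
    _ ≤ x ^ e := Real.rpow_le_rpow (Real.rpow_nonneg ha.le _) h he.le

lemma my_abs_exp_sub_one_le {w : ℝ} (hw : w ≤ 1/2) : |Real.exp w - 1| ≤ 2 * |w| := by
  rcases le_or_gt 0 w with h | h
  · rw [abs_of_nonneg (by linarith [Real.one_le_exp h] : (0:ℝ) ≤ Real.exp w - 1),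
      abs_of_nonneg h]
    have h1 : Real.exp w ≤ Real.exp (1/2) := Real.exp_le_exp.2 hw
    have h2 : Real.exp (1/2) ^ 2 = Real.exp 1 := by
      rw [← Real.exp_nat_mul]; norm_num
    have h3 : Real.exp (1/2) ≤ 2 := by
      nlinarith [Real.exp_pos (1/2 : ℝ), Real.exp_one_lt_d9]
    have h5 : (1 - w) * Real.exp w ≤ 1 := by
      have h6 := Real.add_one_le_exp (-w)
      rw [Real.exp_neg] at h6
      calc (1 - w) * Real.exp w ≤ (Real.exp w)⁻¹ * Real.exp w :=
            mul_le_mul_of_nonneg_right (by linarith) (Real.exp_pos w).le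
        _ = 1 := inv_mul_cancel₀ (Real.exp_pos w).ne'
    nlinarith [Real.exp_pos w, mul_le_mul_of_nonneg_left (h1.trans h3) h]
  · have h1 := Real.add_one_le_exp w
    have h2 : Real.exp w ≤ 1 := by
      rw [← Real.exp_zero]; exact Real.exp_le_exp.2 h.le
    rw [abs_of_neg h, abs_of_nonpos (by linarith : Real.exp w - 1 ≤ 0)]
    linarith

lemma my_pareto_core (T : ℕ) (hT : 0 < T) {L δ s : ℝ} (hL : 0 < L)
    (hLT : L / T ≤ 1/8) (hδ1 : δ ≤ L / (2*T)) (hδ2 : δ ≤ 1/(2*T))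
    (hs : |s - L/T| ≤ δ) :
    |(1 - s)^T - Real.exp (-L)| ≤ Real.exp (-L) * (4*L^2/T + 2*T*δ) := by
  have ht : (0:ℝ) < T := Nat.cast_pos.2 hT
  have hδ0 : 0 ≤ δ := le_trans (abs_nonneg _) hs
  have habs := abs_le.1 hs
  have hLT' : 0 < L / T := div_pos hL ht
  have hs0 : 0 < s := by
    have hhalf : L/T - L/(2*T) = L/(2*T) := by field_simp; ring
    have h2 : L/(2*T) ≤ s := by linarith [habs.1]
    linarith [div_pos hL (by linarith : (0:ℝ) < 2*T)]
  have hs_ub : s ≤ 3/2 * (L/T) := by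
    have hhalf : L/T + L/(2*T) = 3/2*(L/T) := by field_simp; ring
    linarith [habs.2]
  have hs316 : s ≤ 3/16 := by nlinarith
  have h1s : 0 < 1 - s := by linarith
  have hlog := Real.abs_log_sub_add_sum_range_le (by rw [abs_of_pos hs0]; linarith : |s| < 1) 2
  have hsum : (∑ i ∈ Finset.range 2, s ^ (i+1)/((i:ℝ)+1)) = s + s^2/2 := by
    simp [Finset.sum_range_succ]
    ring
  rw [hsum, abs_of_pos hs0] at hlog
  norm_num at hlog
  obtain ⟨r, hr_def⟩ : ∃ r : ℝ, r = -Real.log (1 - s) - s := ⟨_, rfl⟩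
  have hlog2 : Real.log (1 - s) = -s - r := by rw [hr_def]; ring
  have hr0 : 0 ≤ r := by
    have := Real.log_le_sub_one_of_pos h1s
    rw [hr_def]; linarith
  have hr_ub : r ≤ (19/26) * s^2 := by
    have h1 := (abs_le.1 hlog).1
    have hcube : s^3/(1-s) ≤ (3/13) * s^2 := by
      rw [div_le_iff₀ h1s]; nlinarith
    rw [hr_def]
    linarith
  obtain ⟨w, hw_def⟩ : ∃ w : ℝ, w = L - T*s - T*r := ⟨_, rfl⟩
  have hTs : |L - (T:ℝ)*s| ≤ T*δ := by
    have hLeq : (T:ℝ) * (L/T) = L := by field_simp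
    have heq2 : L - (T:ℝ)*s = -((T:ℝ)*(s - L/T)) := by rw [mul_sub, hLeq]; ring
    rw [heq2, abs_neg, abs_mul, abs_of_pos ht]
    exact mul_le_mul_of_nonneg_left hs ht.le
  have hTδ : (T:ℝ)*δ ≤ 1/2 := by
    have h1 := mul_le_mul_of_nonneg_left hδ2 ht.le
    have h2 : (T:ℝ) * (1/(2*T)) = 1/2 := by field_simp
    linarith
  have hw_ub : w ≤ 1/2 := by
    have h1 := (abs_le.1 hTs).2
    have h2 := mul_nonneg ht.le hr0
    rw [hw_def]; linarith
  have hTr : (T:ℝ)*r ≤ 2*L^2/T := by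
    rw [le_div_iff₀ ht]
    have hTs2 : (T:ℝ)*s ≤ 3/2*L := by
      have h1 := mul_le_mul_of_nonneg_left hs_ub ht.le
      have h2 : (T:ℝ) * (3/2*(L/T)) = 3/2*L := by field_simp
      linarith
    have h3 : ((T:ℝ)*s)^2 ≤ (3/2*L)^2 := by
      nlinarith [mul_nonneg ht.le hs0.le]
    have h4 := mul_le_mul_of_nonneg_left hr_ub (mul_pos ht ht).le
    have h5 : (0:ℝ) ≤ L^2 := sq_nonneg L
    linarith [h3, h4, h5]
  have hw_abs : |w| ≤ T*δ + 2*L^2/T := by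
    have h1 : |w| ≤ |L - (T:ℝ)*s| + |(T:ℝ)*r| := by
      rw [hw_def]
      exact abs_sub _ _
    rw [abs_of_nonneg (mul_nonneg ht.le hr0)] at h1
    linarith
  have hexp := my_abs_exp_sub_one_le hw_ub
  have key : (1 - s)^T = Real.exp (-L) * Real.exp w := by
    rw [← Real.exp_log h1s, ← Real.exp_nat_mul, ← Real.exp_add]
    congr 1
    rw [hlog2, hw_def]; ring
  rw [key]
  have heq : Real.exp (-L) * Real.exp w - Real.exp (-L) = Real.exp (-L) * (Real.exp w - 1) := by
    ring
  rw [heq, abs_mul, abs_of_pos (Real.exp_pos _)]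
  apply mul_le_mul_of_nonneg_left _ (Real.exp_pos _).le
  calc |Real.exp w - 1| ≤ 2*|w| := hexp
    _ ≤ 2*(T*δ + 2*L^2/T) := by linarith
    _ = 4*L^2/T + 2*T*δ := by ring

theorem max_second_order_pareto_reparametrized
    {Ω : Type*} [MeasurableSpace Ω] (μ : Measure Ω) [IsProbabilityMeasure μ]
    (T : ℕ) (hT : 0 < T) (α β C C' : ℝ) (hα : 0 < α) (hβ : 0 < β)
    (hC : 0 < C) (hC' : 0 < C')
    (P : ℝ → ℝ) (hP : IsSecondOrderPareto α β C C' P)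
    (X : Fin T → Ω → ℝ) (hmeas : ∀ i, Measurable (X i))
    (hindep : iIndepFun X μ)
    (hdist : ∀ i x, (μ {ω | X i ω ≤ x}).toReal = P x)
    (u : ℝ) (hu0 : 0 < u) (hu1 : u < 1)
    (hTlarge : Real.log (1 / u) * (paretoB α β C C' T) ^ α / C ≤ (T : ℝ)) :
    |(μ {ω | ∀ i, X i ω ≤ ((T : ℝ) * C / Real.log (1 / u)) ^ (1 / α)}).toReal - u| ≤
      u * (4 / (T : ℝ) * (Real.log (1 / u)) ^ (2 : ℝ)
          + 2 * C' / (C ^ (β + 1) * (T : ℝ) ^ β) * (Real.log (1 / u)) ^ (1 + β)) := by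
  have paretoB_def : paretoB α β C C' T =
      max (max ((2 * C' / C) ^ (1 / (α * β))) ((8 * C) ^ (1 / α)))
        ((2 * (T : ℝ) * C') ^ (1 / (α * (1 + β)))) := rfl
  have ht : (0:ℝ) < T := Nat.cast_pos.2 hT
  obtain ⟨L, hLdef⟩ : ∃ L : ℝ, L = Real.log (1/u) := ⟨_, rfl⟩
  rw [← hLdef] at hTlarge ⊢
  have hL : 0 < L := hLdef ▸ Real.log_pos (one_lt_one_div hu0 hu1)
  obtain ⟨x₀, hx₀def⟩ : ∃ x : ℝ, x = ((T:ℝ)*C/L)^(1/α) := ⟨_, rfl⟩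
  rw [← hx₀def]
  have hbase : 0 < (T:ℝ)*C/L := by positivity
  have hx₀pos : 0 < x₀ := hx₀def ▸ Real.rpow_pos_of_pos hbase _
  have hxα : x₀ ^ α = (T:ℝ)*C/L := by
    rw [hx₀def, ← Real.rpow_mul hbase.le, one_div, inv_mul_cancel₀ hα.ne', Real.rpow_one]
  have hBα : (paretoB α β C C' T) ^ α ≤ x₀ ^ α := by
    rw [hxα]
    have h1 := (div_le_iff₀ hC).1 hTlarge
    rw [le_div_iff₀ hL]
    linarith
  have hB0 : 0 < paretoB α β C C' T := by
    rw [paretoB_def]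
    exact lt_of_lt_of_le
      (Real.rpow_pos_of_pos (by positivity) _) (le_max_left _ _) |>.trans_le
      (le_max_left _ _)
  have hBx : paretoB α β C C' T ≤ x₀ := by
    by_contra hcon
    push_neg at hcon
    exact absurd hBα (not_le.2 (Real.rpow_lt_rpow hx₀pos.le hcon hα))
  have hB1 : (2*C'/C) ^ (1/(α*β)) ≤ x₀ :=
    le_trans (le_trans (le_max_left _ _) (le_max_left _ _)) (paretoB_def ▸ hBx)
  have hB2 : (8*C) ^ (1/α) ≤ x₀ :=
    le_trans (le_trans (le_max_right _ _) (le_max_left _ _)) (paretoB_def ▸ hBx)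
  have hB3 : (2*(T:ℝ)*C') ^ (1/(α*(1+β))) ≤ x₀ :=
    le_trans (le_max_right _ _) (paretoB_def ▸ hBx)
  have hc1 : 2*C'/C ≤ x₀ ^ (α*β) := my_rpow_root_le (by positivity) (by positivity) hB1
  have hc2 : 8*C ≤ x₀ ^ α := my_rpow_root_le (by positivity) hα hB2
  have hc3 : 2*(T:ℝ)*C' ≤ x₀ ^ (α*(1+β)) :=
    my_rpow_root_le (mul_pos (mul_pos two_pos ht) hC') (by positivity) hB3
  have hLT8 : L/(T:ℝ) ≤ 1/8 := by
    rw [hxα] at hc2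
    have h1 := (le_div_iff₀ hL).1 hc2
    rw [div_le_div_iff₀ ht (by norm_num : (0:ℝ) < 8)]
    nlinarith
  have hxnegα : x₀ ^ (-α) = L/((T:ℝ)*C) := by
    rw [Real.rpow_neg hx₀pos.le, hxα, inv_div]
  have hCx : C * x₀ ^ (-α) = L/(T:ℝ) := by
    rw [hxnegα]
    field_simp
  obtain ⟨δ, hδdef⟩ : ∃ d : ℝ, d = C' * x₀ ^ (-(α*(1+β))) := ⟨_, rfl⟩
  have hxsplit : x₀ ^ (-(α*(1+β))) = x₀ ^ (-α) * x₀ ^ (-(α*β)) := by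
    rw [← Real.rpow_add hx₀pos]
    congr 1
    ring
  have hδ2 : δ ≤ 1/(2*(T:ℝ)) := by
    have hpos : 0 < x₀ ^ (α*(1+β)) := Real.rpow_pos_of_pos hx₀pos _
    rw [hδdef, Real.rpow_neg hx₀pos.le, inv_eq_one_div, mul_one_div,
      div_le_div_iff₀ hpos (by positivity)]
    linarith
  have hδ1 : δ ≤ L/(2*(T:ℝ)) := by
    have hpos : 0 < x₀ ^ (α*β) := Real.rpow_pos_of_pos hx₀pos _
    have h1 : x₀ ^ (-(α*β)) ≤ C/(2*C') := by
      rw [Real.rpow_neg hx₀pos.le, inv_eq_one_div, div_le_div_iff₀ hpos (by positivity)]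
      have h2 := (div_le_iff₀ hC).1 hc1
      linarith
    have h2 : (0:ℝ) ≤ x₀ ^ (-(α*β)) := (Real.rpow_pos_of_pos hx₀pos _).le
    rw [hδdef, hxsplit, hxnegα]
    calc C' * (L/((T:ℝ)*C) * x₀^(-(α*β)))
        ≤ C' * (L/((T:ℝ)*C) * (C/(2*C'))) := by
          apply mul_le_mul_of_nonneg_left _ hC'.le
          exact mul_le_mul_of_nonneg_left h1 (by positivity)
      _ = L/(2*(T:ℝ)) := by field_simp
  have hδTeq : (T:ℝ) * δ = C' / (C^(β+1) * (T:ℝ)^β) * L^(1+β) := by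
    have e1 : x₀ ^ (-(α*(1+β))) = ((T:ℝ)*C/L) ^ (-(1+β)) := by
      rw [← hxα, ← Real.rpow_mul hx₀pos.le]
      congr 1
      ring
    have e2 : (T:ℝ)^((1:ℝ)+β) = T * (T:ℝ)^β := by
      rw [Real.rpow_add ht, Real.rpow_one]
    have e3 : C^(β+(1:ℝ)) = C^((1:ℝ)+β) := by rw [add_comm]
    rw [hδdef, e1, Real.rpow_neg hbase.le, Real.div_rpow (by positivity) hL.le,
      Real.mul_rpow ht.le hC.le, e2, e3]
    have p1 : (0:ℝ) < (T:ℝ)^β := Real.rpow_pos_of_pos ht _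
    have p2 : (0:ℝ) < C^((1:ℝ)+β) := Real.rpow_pos_of_pos hC _
    have p3 : (0:ℝ) < L^((1:ℝ)+β) := Real.rpow_pos_of_pos hL _
    field_simp
  have hPs := hP x₀ hx₀pos
  rw [hCx, ← hδdef] at hPs
  have hcore := my_pareto_core T hT hL hLT8 hδ1 hδ2 hPs
  rw [sub_sub_cancel] at hcore
  have hmeasure : (μ {ω | ∀ i, X i ω ≤ x₀}).toReal = (P x₀)^T := by
    have hset : {ω | ∀ i, X i ω ≤ x₀} = ⋂ i, X i ⁻¹' (Set.Iic x₀) := by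
      ext ω
      simp [Set.mem_iInter, Set.mem_preimage, Set.mem_Iic]
    rw [hset, hindep.meas_iInter (fun i => ⟨Set.Iic x₀, measurableSet_Iic, rfl⟩),
      ENNReal.toReal_prod]
    have hd : ∀ i : Fin T, (μ (X i ⁻¹' Set.Iic x₀)).toReal = P x₀ := fun i => hdist i x₀
    rw [Finset.prod_congr rfl (fun i _ => hd i), Finset.prod_const, Finset.card_univ,
      Fintype.card_fin]
  have huL : Real.exp (-L) = u := by
    rw [hLdef, one_div, Real.log_inv, neg_neg, Real.exp_log hu0]
  rw [huL] at hcore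
  have hL2 : L^(2:ℝ) = L^(2:ℕ) := by
    rw [← Real.rpow_natCast L 2]
    norm_num
  rw [hmeasure, hL2]
  calc |(P x₀)^T - u| ≤ u * (4*L^2/T + 2*((T:ℝ)*δ)) := by
        have : (4:ℝ)*L^2/T + 2*T*δ = 4*L^2/T + 2*((T:ℝ)*δ) := by ring
        linarith [hcore, this]
    _ = u * (4/(T:ℝ)*L^2 + 2*C'/(C^(β+1)*(T:ℝ)^β)*L^(1+β)) := by
        rw [hδTeq]
        ring
end

section
/- Let T be a positive integer, let α, β, C, C' > 0, and let X_1, …, X_T be i.i.d. samples drawn from an (α,β,C,C')-second order Pareto distribution P. Then for every x ≥ B, where B = max((2C'/C)^{1/(αβ)}, (8C)^{1/α}, (2TC')^{1/(α(1+β)))}), the following two-sided bound holds: exp(−TC·x^{−α}) · exp(−4T·(C·x^{−α})² − T·C'·x^{−α(1+β)}) ≤ Pr(max_{i≤T} X_i ≤ x) ≤ exp(−TC·x^{−α}) · exp(T·C'·x^{−α(1+β)}). -/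
open MeasureTheory ProbabilityTheory Real

/-- For `y < 1`, `exp (-(y + y²/(1-y))) ≤ 1 - y`. -/
lemma exp_le_one_sub_aux {y : ℝ} (h1 : y < 1) :
    Real.exp (-(y + y ^ 2 / (1 - y))) ≤ 1 - y := by
  have h1' : 0 < 1 - y := by linarith
  have key : y + y ^ 2 / (1 - y) = y / (1 - y) := by field_simp; ring
  rw [key]
  have h2 : 1 / (1 - y) ≤ Real.exp (y / (1 - y)) := by
    have h3 : 1 + y / (1 - y) = 1 / (1 - y) := by field_simp; ring
    linarith [Real.add_one_le_exp (y / (1 - y))]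
  calc Real.exp (-(y / (1 - y))) = (Real.exp (y / (1 - y)))⁻¹ := by rw [Real.exp_neg]
    _ ≤ (1 / (1 - y))⁻¹ := inv_anti₀ (by positivity) h2
    _ = 1 - y := by field_simp

theorem max_second_order_pareto_two_sided
    {Ω : Type*} [MeasurableSpace Ω] (μ : Measure Ω) [IsProbabilityMeasure μ]
    (T : ℕ) (hT : 0 < T) (α β C C' : ℝ) (hα : 0 < α) (hβ : 0 < β)
    (hC : 0 < C) (hC' : 0 < C')
    (P : ℝ → ℝ) (hP : IsSecondOrderPareto α β C C' P)
    (X : Fin T → Ω → ℝ) (hmeas : ∀ i, Measurable (X i))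
    (hindep : iIndepFun X μ)
    (hdist : ∀ i x, (μ {ω | X i ω ≤ x}).toReal = P x)
    (x : ℝ) (hx : paretoB α β C C' T ≤ x) :
    Real.exp (-((T : ℝ) * C * x ^ (-α)))
        * Real.exp (-(4 * (T : ℝ) * (C * x ^ (-α)) ^ (2 : ℝ))
            - (T : ℝ) * C' * x ^ (-(α * (1 + β)))) ≤
      (μ {ω | ∀ i, X i ω ≤ x}).toReal ∧
    (μ {ω | ∀ i, X i ω ≤ x}).toReal ≤
      Real.exp (-((T : ℝ) * C * x ^ (-α)))
        * Real.exp ((T : ℝ) * C' * x ^ (-(α * (1 + β)))) := by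
  -- the probability of the event is `P x ^ T`
  have hprob : (μ {ω | ∀ i, X i ω ≤ x}).toReal = P x ^ T := by
    have hset : {ω | ∀ i, X i ω ≤ x} = ⋂ i, X i ⁻¹' Set.Iic x := by
      ext ω; simp [Set.mem_iInter]
    rw [hset, hindep.meas_iInter (fun i => ⟨Set.Iic x, measurableSet_Iic, rfl⟩),
      ENNReal.toReal_prod]
    have h : ∀ i : Fin T, (μ (X i ⁻¹' Set.Iic x)).toReal = P x := fun i => hdist i x
    simp [h]
  -- basic bounds on x
  have hx1 : (2 * C' / C) ^ (1 / (α * β)) ≤ x :=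
    le_trans (le_trans (le_max_left _ _) (le_max_left _ _)) hx
  have hx2 : (8 * C) ^ (1 / α) ≤ x :=
    le_trans (le_trans (le_max_right _ _) (le_max_left _ _)) hx
  have h8 : (0:ℝ) < 8 * C := by linarith
  have hx0 : 0 < x := lt_of_lt_of_le (Real.rpow_pos_of_pos h8 _) hx2
  set ε : ℝ := C * x ^ (-α) with hεdef
  set δ : ℝ := C' * x ^ (-(α * (1 + β))) with hδdef
  have hε0 : 0 < ε := by rw [hεdef]; positivity
  have hδ0 : 0 < δ := by rw [hδdef]; positivity
  -- ε ≤ 1/8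
  have hε : ε ≤ 1/8 := by
    have hxa : 8 * C ≤ x ^ α := by
      have := Real.rpow_le_rpow (le_of_lt (Real.rpow_pos_of_pos h8 _)) hx2 hα.le
      rwa [one_div, Real.rpow_inv_rpow h8.le (ne_of_gt hα)] at this
    have hxap : 0 < x ^ α := Real.rpow_pos_of_pos hx0 _
    rw [hεdef, Real.rpow_neg hx0.le, mul_inv_le_iff₀ hxap]
    linarith
  -- δ ≤ ε / 2
  have hδ : δ ≤ ε / 2 := by
    have hcc : (0:ℝ) < 2 * C' / C := by positivity
    have hxb : 2 * C' / C ≤ x ^ (α * β) := by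
      have := Real.rpow_le_rpow (le_of_lt (Real.rpow_pos_of_pos hcc _)) hx1
        (by positivity : (0:ℝ) ≤ α * β)
      rwa [one_div, Real.rpow_inv_rpow hcc.le (by positivity)] at this
    have hsplit : x ^ (-(α * (1 + β))) = x ^ (-α) * x ^ (-(α * β)) := by
      rw [← Real.rpow_add hx0]; ring_nf
    have hxab : x ^ (-(α * β)) ≤ C / (2 * C') := by
      rw [Real.rpow_neg hx0.le, ← inv_div]
      exact inv_anti₀ hcc hxb
    have hpa : (0:ℝ) < x ^ (-α) := Real.rpow_pos_of_pos hx0 _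
    calc δ = C' * (x ^ (-α) * x ^ (-(α * β))) := by rw [hδdef, hsplit]
      _ ≤ C' * (x ^ (-α) * (C / (2 * C'))) := by
          apply mul_le_mul_of_nonneg_left (mul_le_mul_of_nonneg_left hxab hpa.le) hC'.le
      _ = ε / 2 := by rw [hεdef]; field_simp
  -- bounds on P x
  have hPx := abs_le.mp (hP x hx0)
  have hplo : 1 - ε - δ ≤ P x := by linarith [hPx.2]
  have hphi : P x ≤ 1 - ε + δ := by linarith [hPx.1]
  have hp0 : 0 ≤ P x := (hdist ⟨0, hT⟩ x) ▸ ENNReal.toReal_nonneg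
  have hexp2 : ε ^ (2:ℝ) = ε ^ 2 := by
    rw [show ((2:ℝ) = ((2:ℕ):ℝ)) from by norm_num, Real.rpow_natCast]
  rw [hprob]
  constructor
  · -- lower bound
    have hy1 : ε + δ < 1 := by linarith
    have hkey : Real.exp (-(ε + δ + 4 * ε ^ 2)) ≤ P x := by
      have h1 := exp_le_one_sub_aux hy1
      have h2 : (ε + δ) ^ 2 / (1 - (ε + δ)) ≤ 4 * ε ^ 2 := by
        rw [div_le_iff₀ (by linarith)]
        nlinarith [sq_nonneg ε, hε0.le, hδ0.le]
      calc Real.exp (-(ε + δ + 4 * ε ^ 2))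
          ≤ Real.exp (-((ε + δ) + (ε + δ) ^ 2 / (1 - (ε + δ)))) := by
            apply Real.exp_le_exp.2; linarith
        _ ≤ 1 - (ε + δ) := h1
        _ ≤ P x := by linarith
    calc Real.exp (-((T : ℝ) * C * x ^ (-α)))
          * Real.exp (-(4 * (T : ℝ) * ε ^ (2:ℝ)) - (T : ℝ) * C' * x ^ (-(α * (1 + β))))
        = Real.exp (-(ε + δ + 4 * ε ^ 2)) ^ T := by
          rw [← Real.exp_nat_mul, ← Real.exp_add]
          congr 1
          rw [hexp2, hεdef, hδdef]; ring
      _ ≤ P x ^ T := pow_le_pow_left₀ (Real.exp_nonneg _) hkey T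
  · -- upper bound
    calc P x ^ T ≤ (1 - ε + δ) ^ T := pow_le_pow_left₀ hp0 hphi T
      _ ≤ Real.exp (δ - ε) ^ T := by
          apply pow_le_pow_left₀ (by linarith)
          linarith [Real.add_one_le_exp (δ - ε)]
      _ = Real.exp (-((T : ℝ) * C * x ^ (-α)))
          * Real.exp ((T : ℝ) * C' * x ^ (-(α * (1 + β)))) := by
          rw [← Real.exp_nat_mul, ← Real.exp_add]
          congr 1
          rw [hεdef, hδdef]; ring
end

section
/- Let α, β, C, C' > 0. There exists a constant c > 0, depending only on C, C' and β, such that the following holds. Let T be a positive integer and δ ∈ (0, 1/2) be such that c·max(1/T, 1/T^β) ≤ 1/4 and T ≥ log(2)·max(C·(2C')^{1/β}, 8·log 2). Let X_1, …, X_T be i.i.d. samples drawn from an (α,β,C,C')-second order Pareto distribution P, and let x_δ be any real number with Pr(max_{t≤T} X_t ≤ x_δ) = 1 − δ. Then (TC/log(1/(1−2δ)))^{1/α} ≤ x_δ ≤ (TC/log(1/(1−δ/2)))^{1/α}. -/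
open MeasureTheory ProbabilityTheory Real

set_option maxHeartbeats 1000000 in
lemma key_bounds (β C C' : ℝ) (hβ : 0 < β) (hC : 0 < C) (hC' : 0 < C')
    (α : ℝ) (hα : 0 < α) (T : ℕ) (hT : 0 < T) (δ : ℝ) (hδ0 : 0 < δ) (hδ2 : δ < 1/2)
    (hT1 : 2 * Real.log 2 / (C * (C/(2*C')) ^ (1/β)) ≤ (T:ℝ))
    (hT2 : 2 * C' * (Real.log 2) ^ β / C ^ (1+β) ≤ (T:ℝ) ^ β)
    (F : ℝ → ℝ)
    (hPar : ∀ x : ℝ, 0 < x → |1 - F x - C * x ^ (-α)| ≤ C' * x ^ (-(α * (1 + β))))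
    (hmono : Monotone F) (hF0 : ∀ x, 0 ≤ F x) :
    F (((T : ℝ) * C / Real.log (1 / (1 - 2 * δ))) ^ (1 / α)) ^ T < 1 - δ ∧
    1 - δ < F (((T : ℝ) * C / Real.log (1 / (1 - δ / 2))) ^ (1 / α)) ^ T := by
  have hTpos : (0:ℝ) < T := Nat.cast_pos.mpr hT
  have h2δ : (0:ℝ) < 1 - 2*δ := by linarith
  have hδ1 : (0:ℝ) < 1 - δ := by linarith
  have hδh : (0:ℝ) < 1 - δ/2 := by linarith
  have hG : 0 < Real.log (1/(1-2*δ)) := Real.log_pos (by rw [lt_div_iff₀ h2δ]; linarith)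
  have hl : 0 < Real.log (1/(1-δ)) := Real.log_pos (by rw [lt_div_iff₀ hδ1]; linarith)
  have hH : 0 < Real.log (1/(1-δ/2)) := Real.log_pos (by rw [lt_div_iff₀ hδh]; linarith)
  set G := Real.log (1/(1-2*δ)) with hG_def
  set H := Real.log (1/(1-δ/2)) with hH_def
  set s : ℝ := Real.log (1/(1-δ)) / T with hs_def
  have hspos : 0 < s := div_pos hl hTpos
  clear_value G H s
  constructor
  · -- Lower bound part : F L ^ T < 1 - δ
    set a : ℝ := G / T with ha_def
    have hapos : 0 < a := div_pos hG hTpos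
    clear_value a
    have hXL : 0 < (T:ℝ)*C/G := by positivity
    set L := (((T:ℝ)*C/G) ^ (1/α)) with hL_def
    have hLpos : 0 < L := Real.rpow_pos_of_pos hXL _
    have hinv : ((T:ℝ)*C/G)⁻¹ = a / C := by
      rw [ha_def]; field_simp
    have hLα : L ^ (-α) = a / C := by
      rw [hL_def, ← Real.rpow_mul hXL.le,
        show (1/α) * (-α) = -1 by field_simp, Real.rpow_neg_one, hinv]
    have hLβ : L ^ (-(α*(1+β))) = (a/C) ^ (1+β) := by
      rw [hL_def, ← Real.rpow_mul hXL.le,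
        show (1/α) * (-(α*(1+β))) = -(1+β) by field_simp,
        Real.rpow_neg hXL.le, ← Real.inv_rpow hXL.le, hinv]
    have hPL := hPar L hLpos
    rw [hLα, hLβ, show C * (a/C) = a by field_simp] at hPL
    have hlow : a - C' * (a/C)^(1+β) ≤ 1 - F L := by
      have := (abs_le.mp hPL).1; linarith
    have has : 2*s < a := by
      have h1 : (1/(1-δ))^(2:ℕ) < 1/(1-2*δ) := by
        rw [div_pow, one_pow, div_lt_div_iff₀ (by positivity) h2δ]; nlinarith
      have h2 : (2:ℕ) * Real.log (1/(1-δ)) < G := by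
        rw [hG_def, ← Real.log_pow]; exact Real.log_lt_log (by positivity) h1
      calc 2*s = (2 * Real.log (1/(1-δ)))/T := by rw [hs_def]; ring
        _ < G/T := by push_cast at h2; gcongr
        _ = a := ha_def.symm
    -- key claim: s < 1 - F L
    have hu : s < 1 - F L := by
      rcases le_or_gt (C' * (a/C)^(1+β)) (a/2) with hcase|hcase
      · linarith
      · set K := (C/(2*C')) ^ (1/β) with hK_def
        have hKpos : 0 < K := Real.rpow_pos_of_pos (by positivity) _
        have hKβ : K ^ β = C/(2*C') := by
          rw [hK_def, ← Real.rpow_mul (by positivity),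
            one_div, inv_mul_cancel₀ hβ.ne', Real.rpow_one]
        have hsplit : ∀ y : ℝ, 0 < y → y^(1+β) = y * y^β := by
          intro y hy; rw [Real.rpow_add hy, Real.rpow_one]
        have haK : K < a/C := by
          by_contra hcon
          push_neg at hcon
          have h1 : (a/C)^β ≤ K^β :=
            Real.rpow_le_rpow (by positivity) hcon hβ.le
          rw [hKβ] at h1
          have h2 : C' * (a/C)^(1+β) ≤ a/2 := by
            rw [hsplit _ (by positivity)]
            calc C' * ((a/C) * (a/C)^β) = (C'*(a/C)) * (a/C)^β := by ring
              _ ≤ (C'*(a/C)) * (C/(2*C')) := by gcongr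
              _ = a/2 := by field_simp
          linarith
        set xs := K ^ (-(1/α)) with hxs_def
        have hxspos : 0 < xs := Real.rpow_pos_of_pos hKpos _
        have hxsα : xs ^ (-α) = K := by
          rw [hxs_def, ← Real.rpow_mul hKpos.le,
            show (-(1/α)) * (-α) = 1 by field_simp, Real.rpow_one]
        have hxsβ : xs ^ (-(α*(1+β))) = K * (C/(2*C')) := by
          rw [hxs_def, ← Real.rpow_mul hKpos.le,
            show (-(1/α)) * (-(α*(1+β))) = 1+β by field_simp,
            hsplit _ hKpos, hKβ]
        have hLxs : L < xs := by
          by_contra hcon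
          push_neg at hcon
          have h1 : L ^ (-α) ≤ xs ^ (-α) :=
            Real.rpow_le_rpow_of_nonpos hxspos hcon (by linarith)
          rw [hLα, hxsα] at h1
          linarith
        have hPs := hPar xs hxspos
        rw [hxsα, hxsβ] at hPs
        have hm : C*K/2 ≤ 1 - F xs := by
          have h1 := (abs_le.mp hPs).1
          have h2 : C' * (K * (C/(2*C'))) = C*K/2 := by field_simp
          linarith
        have hFLxs : F L ≤ F xs := hmono hLxs.le
        have hslog : s < Real.log 2 / T := by
          have : Real.log (1/(1-δ)) < Real.log 2 :=
            Real.log_lt_log (by positivity) (by rw [div_lt_iff₀ hδ1]; linarith)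
          rw [hs_def]; gcongr
        have hlogT : Real.log 2 / T ≤ C*K/2 := by
          rw [div_le_iff₀ hTpos]
          have h1 : 0 < C * K := by positivity
          have h2 : 2 * Real.log 2 ≤ (T:ℝ) * (C*K) := by
            have := (div_le_iff₀ h1).mp hT1; linarith
          linarith
        linarith
    -- conclude
    have hFL : F L ≤ 1 - s := by linarith
    calc F L ^ T ≤ Real.exp (-(1 - F L)) ^ T := by
          apply pow_le_pow_left₀ (hF0 L)
          have := Real.add_one_le_exp (-(1 - F L)); linarith
      _ = Real.exp (-((1 - F L)*T)) := by rw [← Real.exp_nat_mul]; ring_nf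
      _ < Real.exp (-(s*T)) := by
          apply Real.exp_lt_exp.mpr
          have : s * T < (1 - F L) * T := mul_lt_mul_of_pos_right hu hTpos
          linarith
      _ = 1 - δ := by
          rw [hs_def, div_mul_cancel₀ _ hTpos.ne', one_div, Real.log_inv, neg_neg,
            Real.exp_log hδ1]
  · -- Upper bound part : 1 - δ < F U ^ T
    set b : ℝ := H / T with hb_def
    have hbpos : 0 < b := div_pos hH hTpos
    clear_value b
    have hXU : 0 < (T:ℝ)*C/H := by positivity
    set U := (((T:ℝ)*C/H) ^ (1/α)) with hU_def
    have hUpos : 0 < U := Real.rpow_pos_of_pos hXU _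
    have hinv : ((T:ℝ)*C/H)⁻¹ = b / C := by
      rw [hb_def]; field_simp
    have hUα : U ^ (-α) = b / C := by
      rw [hU_def, ← Real.rpow_mul hXU.le,
        show (1/α) * (-α) = -1 by field_simp, Real.rpow_neg_one, hinv]
    have hUβ : U ^ (-(α*(1+β))) = (b/C) ^ (1+β) := by
      rw [hU_def, ← Real.rpow_mul hXU.le,
        show (1/α) * (-(α*(1+β))) = -(1+β) by field_simp,
        Real.rpow_neg hXU.le, ← Real.inv_rpow hXU.le, hinv]
    have hPU := hPar U hUpos
    rw [hUα, hUβ, show C * (b/C) = b by field_simp] at hPU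
    have hHlog2 : H ≤ Real.log 2 := by
      rw [hH_def]
      apply Real.log_le_log (by positivity)
      rw [div_le_iff₀ hδh]; linarith
    have hsmall : C' * (b/C)^(1+β) ≤ b/2 := by
      have h1 : (b/C)^β ≤ C/(2*C') := by
        have h2 : (b/C)^β ≤ (Real.log 2/((T:ℝ)*C))^β := by
          apply Real.rpow_le_rpow (by positivity) ?_ hβ.le
          rw [hb_def, div_div]
          gcongr
        have h3 : (Real.log 2/((T:ℝ)*C))^β = (Real.log 2)^β / ((T:ℝ)^β * C^β) := by
          rw [Real.div_rpow (by positivity) (by positivity),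
            Real.mul_rpow (by positivity) (by positivity)]
        have h4 : (Real.log 2)^β / ((T:ℝ)^β * C^β) ≤ C/(2*C') := by
          rw [div_le_div_iff₀ (by positivity) (by positivity)]
          have h5 : C^(1+β) = C * C^β := by rw [Real.rpow_add hC, Real.rpow_one]
          have h6 : 2*C'*(Real.log 2)^β ≤ (T:ℝ)^β * C^(1+β) :=
            (div_le_iff₀ (by positivity)).mp hT2
          rw [h5] at h6; ring_nf at h6 ⊢; linarith
        calc (b/C)^β ≤ (Real.log 2/((T:ℝ)*C))^β := h2
          _ = (Real.log 2)^β / ((T:ℝ)^β * C^β) := h3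
          _ ≤ C/(2*C') := h4
      have h7 : (b/C)^(1+β) = (b/C) * (b/C)^β := by
        rw [Real.rpow_add (by positivity), Real.rpow_one]
      rw [h7]
      calc C' * ((b/C) * (b/C)^β) = (C'*(b/C)) * (b/C)^β := by ring
        _ ≤ (C'*(b/C)) * (C/(2*C')) := by gcongr
        _ = b/2 := by field_simp
    have hup : 1 - F U ≤ (3/2)*b := by
      have := (abs_le.mp hPU).2; linarith
    have hbern : 1 - (T:ℝ)*(1 - F U) ≤ F U ^ T := by
      have h := one_add_mul_le_pow (a := F U - 1) (by nlinarith [hF0 U]) T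
      rw [show (1:ℝ) + (F U - 1) = F U by ring] at h
      linarith
    have hHδ : (3/2)*H < δ := by
      have h1 : H ≤ 1/(1-δ/2) - 1 := by
        rw [hH_def]; exact Real.log_le_sub_one_of_pos (by positivity)
      have h2 : (1-δ/2) * (1/(1-δ/2)) = 1 := mul_one_div_cancel hδh.ne'
      nlinarith
    have hTb : (T:ℝ)*(1 - F U) < δ := by
      have h1 : (T:ℝ)*((3/2)*b) = (3/2)*H := by
        rw [hb_def]; field_simp
      have h2 : (T:ℝ)*(1-F U) ≤ (T:ℝ)*((3/2)*b) := by gcongr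
      linarith
    linarith

set_option maxHeartbeats 1000000 in
/-- Localization of the `(1-δ)`-quantile of the maximum of i.i.d. second-order
Pareto samples. -/
theorem quantile_of_max_bounds (β C C' : ℝ) (hβ : 0 < β) (hC : 0 < C) (hC' : 0 < C') :
    ∃ c : ℝ, 0 < c ∧
      ∀ α : ℝ, 0 < α →
      ∀ (T : ℕ), 0 < T →
        ∀ δ : ℝ, 0 < δ → δ < 1 / 2 →
          c * max (1 / (T : ℝ)) (1 / (T : ℝ) ^ β) ≤ 1 / 4 →
          Real.log 2 * max (C * (2 * C') ^ (1 / β)) (8 * Real.log 2) ≤ (T : ℝ) →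
          ∀ (Ω : Type) [MeasurableSpace Ω] (μ : Measure Ω) [IsProbabilityMeasure μ]
            (P : ℝ → ℝ), IsSecondOrderPareto α β C C' P →
            ∀ (X : Fin T → Ω → ℝ), (∀ i, Measurable (X i)) →
              iIndepFun X μ →
              (∀ i x, (μ {ω | X i ω ≤ x}).toReal = P x) →
              ∀ xδ : ℝ, (μ {ω | ∀ i, X i ω ≤ xδ}).toReal = 1 - δ →
                ((T : ℝ) * C / Real.log (1 / (1 - 2 * δ))) ^ (1 / α) ≤ xδ ∧
                  xδ ≤ ((T : ℝ) * C / Real.log (1 / (1 - δ / 2))) ^ (1 / α) := by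
  have hlog2 : 0 < Real.log 2 := Real.log_pos one_lt_two
  set c : ℝ := 1 + 2 * Real.log 2 / (C * (C/(2*C')) ^ (1/β))
      + 2 * C' * (Real.log 2) ^ β / C ^ (1+β) with hc_def
  have ht1pos : 0 < 2 * Real.log 2 / (C * (C/(2*C')) ^ (1/β)) := by positivity
  have ht2pos : 0 < 2 * C' * (Real.log 2) ^ β / C ^ (1+β) := by positivity
  have hcpos : 0 < c := by rw [hc_def]; linarith
  refine ⟨c, hcpos, ?_⟩
  intro α hα T hT δ hδ0 hδ2 hc _hTbig Ω _ μ _ P hPar X hXmeas hindep hcdf xδ hxδ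
  have hTpos : (0:ℝ) < T := Nat.cast_pos.mpr hT
  have hTβpos : (0:ℝ) < (T:ℝ) ^ β := by positivity
  -- extract T-size conditions from the c-condition
  have h1 : c * (1/(T:ℝ)) ≤ 1/4 :=
    le_trans (mul_le_mul_of_nonneg_left (le_max_left _ _) hcpos.le) hc
  have h2 : c * (1/(T:ℝ)^β) ≤ 1/4 :=
    le_trans (mul_le_mul_of_nonneg_left (le_max_right _ _) hcpos.le) hc
  have hT4 : 4*c ≤ (T:ℝ) := by
    rw [mul_one_div, div_le_div_iff₀ hTpos (by norm_num)] at h1; linarith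
  have hT4β : 4*c ≤ (T:ℝ)^β := by
    rw [mul_one_div, div_le_div_iff₀ hTβpos (by norm_num)] at h2; linarith
  have hT1 : 2 * Real.log 2 / (C * (C/(2*C')) ^ (1/β)) ≤ (T:ℝ) := by
    rw [hc_def] at hT4; linarith
  have hT2 : 2 * C' * (Real.log 2) ^ β / C ^ (1+β) ≤ (T:ℝ) ^ β := by
    rw [hc_def] at hT4β; linarith
  -- cdf properties
  have i0 : Fin T := ⟨0, hT⟩
  have hmono : Monotone P := by
    intro x y hxy
    rw [← hcdf i0 x, ← hcdf i0 y]
    exact ENNReal.toReal_mono (measure_ne_top μ _)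
      (measure_mono (fun ω h => le_trans h hxy))
  have hF0 : ∀ x, 0 ≤ P x := fun x => by rw [← hcdf i0 x]; exact ENNReal.toReal_nonneg
  -- product formula
  have hqT : P xδ ^ T = 1 - δ := by
    have hset : {ω | ∀ i, X i ω ≤ xδ} = ⋂ i, X i ⁻¹' Set.Iic xδ := by
      ext ω; simp [Set.mem_iInter, Set.mem_preimage]
    have hprod := hindep.meas_iInter (s := fun i => X i ⁻¹' Set.Iic xδ)
      (fun i => ⟨Set.Iic xδ, measurableSet_Iic, rfl⟩)
    rw [hset, hprod] at hxδ
    rw [← hxδ, ENNReal.toReal_prod]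
    have : ∀ i : Fin T, (μ (X i ⁻¹' Set.Iic xδ)).toReal = P xδ := fun i => hcdf i xδ
    simp only [this, Finset.prod_const, Finset.card_univ, Fintype.card_fin]
  obtain ⟨hL, hU⟩ := key_bounds β C C' hβ hC hC' α hα T hT δ hδ0 hδ2 hT1 hT2 P hPar hmono hF0
  constructor
  · by_contra hcon
    push_neg at hcon
    have : P xδ ^ T ≤ P (((T:ℝ)*C/Real.log (1/(1-2*δ))) ^ (1/α)) ^ T :=
      pow_le_pow_left₀ (hF0 xδ) (hmono hcon.le) T
    rw [hqT] at this; linarith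
  · by_contra hcon
    push_neg at hcon
    have : P (((T:ℝ)*C/Real.log (1/(1-δ/2))) ^ (1/α)) ^ T ≤ P xδ ^ T :=
      pow_le_pow_left₀ (hF0 _) (hmono hcon.le) T
    rw [hqT] at this; linarith
end

section
/- Let α > 1, let T and C be positive reals, and let δ ∈ (0, 1/4]. Set x̲ = (TC/log(1/(1−2δ)))^{1/α}. Then the integral over x ∈ (x̲, ∞) of (1 − exp(−TC·x^{−α})) dx is at most (8/(α−1))·(TC)^{1/α}·δ^{1−1/α}. -/
open MeasureTheory Real

/-- The tail integral of the Fréchet cdf beyond the `(1-2δ)`-quantile point is small. -/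
theorem tail_integral_frechet_bound (α T C δ : ℝ) (hα : 1 < α)
    (hT : 0 < T) (hC : 0 < C) (hδ0 : 0 < δ) (hδ : δ ≤ 1 / 4) :
    ∫ x in Set.Ioi ((T * C / Real.log (1 / (1 - 2 * δ))) ^ (1 / α)),
        (1 - Real.exp (-(T * C * x ^ (-α)))) ≤
      8 / (α - 1) * (T * C) ^ (1 / α) * δ ^ (1 - 1 / α) := by
  have hK0 : 0 < T * C := mul_pos hT hC
  set K := T * C with hK
  have h2δ : 0 < 1 - 2 * δ := by linarith
  have hL0 : 0 < Real.log (1 / (1 - 2 * δ)) := by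
    apply Real.log_pos
    rw [lt_div_iff₀ h2δ]; nlinarith
  set L := Real.log (1 / (1 - 2 * δ)) with hLdef
  set c := (K / L) ^ (1 / α) with hc
  have hKL : 0 < K / L := div_pos hK0 hL0
  have hc0 : 0 < c := Real.rpow_pos_of_pos hKL _
  have hα0 : 0 < α := by linarith
  have hαne : α ≠ 0 := ne_of_gt hα0
  have hint : IntegrableOn (fun x : ℝ => K * x ^ (-α)) (Set.Ioi c) :=
    (integrableOn_Ioi_rpow_of_lt (by linarith) hc0).const_mul K
  have hpt : ∀ x ∈ Set.Ioi c, 1 - Real.exp (-(K * x ^ (-α))) ≤ K * x ^ (-α) := by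
    intro x _
    have := Real.add_one_le_exp (-(K * x ^ (-α)))
    linarith
  have hpt0 : ∀ x ∈ Set.Ioi c, 0 ≤ 1 - Real.exp (-(K * x ^ (-α))) := by
    intro x hx
    have hx0 : 0 < x := hc0.trans hx
    have h1 : 0 ≤ K * x ^ (-α) := le_of_lt (mul_pos hK0 (Real.rpow_pos_of_pos hx0 _))
    have h2 : Real.exp (-(K * x ^ (-α))) ≤ 1 := Real.exp_le_one_iff.mpr (by linarith)
    linarith
  have hmf : AEStronglyMeasurable (fun x : ℝ => 1 - Real.exp (-(K * x ^ (-α))))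
      (volume.restrict (Set.Ioi c)) := by
    apply Measurable.aestronglyMeasurable
    fun_prop
  have hf_int : IntegrableOn (fun x : ℝ => 1 - Real.exp (-(K * x ^ (-α)))) (Set.Ioi c) := by
    refine MeasureTheory.Integrable.mono hint hmf ?_
    filter_upwards [MeasureTheory.self_mem_ae_restrict measurableSet_Ioi] with x hx
    have hx0 : 0 < x := hc0.trans hx
    rw [Real.norm_eq_abs, Real.norm_eq_abs, abs_of_nonneg (hpt0 x hx),
      abs_of_nonneg (le_of_lt (mul_pos hK0 (Real.rpow_pos_of_pos hx0 _)))]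
    exact hpt x hx
  have step1 : (∫ x in Set.Ioi c, (1 - Real.exp (-(K * x ^ (-α))))) ≤
      ∫ x in Set.Ioi c, K * x ^ (-α) :=
    setIntegral_mono_on hf_int hint measurableSet_Ioi hpt
  have step2 : ∫ x in Set.Ioi c, K * x ^ (-α) = K * c ^ (1 - α) / (α - 1) := by
    rw [MeasureTheory.integral_const_mul, integral_Ioi_rpow_of_lt (by linarith) hc0]
    rw [show -α + 1 = 1 - α by ring]
    field_simp
    rw [show α - 1 = -(1-α) by ring, div_neg]
  have key : K * c ^ (1 - α) = K ^ (1/α) * L ^ (1 - 1/α) := by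
    have h1 : c ^ (1 - α) = (K / L) ^ (1/α * (1 - α)) := (Real.rpow_mul hKL.le _ _).symm
    rw [h1, div_eq_mul_inv, Real.mul_rpow hK0.le (inv_nonneg.2 hL0.le),
      Real.inv_rpow hL0.le, ← Real.rpow_neg hL0.le, ← mul_assoc]
    nth_rewrite 1 [← Real.rpow_one K]
    rw [← Real.rpow_add hK0]
    rw [show 1 + 1/α*(1-α) = 1/α by field_simp; ring,
      show -(1/α*(1-α)) = 1 - 1/α by field_simp; ring]
  have hp0 : 0 ≤ 1 - 1/α := by
    have : 1/α ≤ 1 := by rw [div_le_one hα0]; linarith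
    linarith
  have hp1 : 1 - 1/α ≤ 1 := by
    have : 0 < 1/α := by positivity
    linarith
  have hL4 : L ≤ 4 * δ := by
    have h1 : L ≤ 1/(1 - 2*δ) - 1 := Real.log_le_sub_one_of_pos (by positivity)
    have h2 : 1/(1 - 2*δ) - 1 ≤ 4 * δ := by
      rw [div_sub' (ne_of_gt h2δ), div_le_iff₀ h2δ]
      nlinarith
    linarith
  have hLδ : L ^ (1 - 1/α) ≤ 8 * δ ^ (1 - 1/α) := by
    have h1 : L ^ (1 - 1/α) ≤ (4 * δ) ^ (1 - 1/α) :=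
      Real.rpow_le_rpow hL0.le hL4 hp0
    have h2 : (4 * δ) ^ (1 - 1/α) = 4 ^ (1 - 1/α) * δ ^ (1 - 1/α) :=
      Real.mul_rpow (by norm_num) hδ0.le
    have h3 : (4:ℝ) ^ (1 - 1/α) ≤ 4 := by
      calc (4:ℝ) ^ (1 - 1/α) ≤ 4 ^ (1:ℝ) :=
            Real.rpow_le_rpow_of_exponent_le (by norm_num) hp1
        _ = 4 := Real.rpow_one 4
    have hδp : 0 ≤ δ ^ (1 - 1/α) := Real.rpow_nonneg hδ0.le _
    nlinarith
  calc (∫ x in Set.Ioi c, (1 - Real.exp (-(K * x ^ (-α)))))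
      ≤ ∫ x in Set.Ioi c, K * x ^ (-α) := step1
    _ = K * c ^ (1 - α) / (α - 1) := step2
    _ = K ^ (1/α) * L ^ (1 - 1/α) / (α - 1) := by rw [key]
    _ ≤ 8 / (α - 1) * K ^ (1/α) * δ ^ (1 - 1/α) := by
        have h : K ^ (1/α) * L ^ (1 - 1/α) ≤ 8 * K ^ (1/α) * δ ^ (1 - 1/α) := by
          calc K ^ (1/α) * L ^ (1 - 1/α)
              ≤ K ^ (1/α) * (8 * δ ^ (1 - 1/α)) :=
                mul_le_mul_of_nonneg_left hLδ (Real.rpow_nonneg hK0.le (1/α))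
            _ = 8 * K ^ (1/α) * δ ^ (1 - 1/α) := by ring
        have hinv : 0 ≤ (α - 1)⁻¹ := inv_nonneg.2 (by linarith)
        calc K ^ (1/α) * L ^ (1 - 1/α) / (α - 1)
            = K ^ (1/α) * L ^ (1 - 1/α) * (α - 1)⁻¹ := div_eq_mul_inv _ _
          _ ≤ 8 * K ^ (1/α) * δ ^ (1 - 1/α) * (α - 1)⁻¹ :=
              mul_le_mul_of_nonneg_right h hinv
          _ = 8 / (α - 1) * K ^ (1/α) * δ ^ (1 - 1/α) := by ring
end
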